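/- arXiv:1911.05462 — 5 statements merged into one kernel-verified Lean document; each statement's English description precedes it below -/
import Mathlib

section
/- Let p ∈ (0,∞) and δ > 0. There exists a real constant C_{p,δ} ∈ (0,∞) such that, for every real-valued random variable Z with Z ∈ L^{p+δ}(ℙ) and every integer N ≥ 1, one has e_{N,p}(Z) ≤ C_{p,δ} · σ_{p+δ}(Z) · N^{−1}, where e_{N,p}(Z) := inf { (E[min_{z∈Γ} |Z − z|^p])^{1/p} : Γ ⊂ ℝ finite, |Γ| ≤ N } and σ_r(Z) := inf_{a∈ℝ} (E|Z − a|^r)^{1/r}. -/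
/-!
Compand a uniform grid: `G(u) = u ^ (-β) - 1` with `β = p / δ` maps the abscissae `j / m` of
`(0, 1]` onto a grid of `[0, ∞)` containing `0`, and the tangent-line inequality for the convex
map `G` shows that every `y ≥ 0` lies within `β (1 + y) ^ (1 + 1/β) / m` of the grid. Reflecting
it, scaling by `s` and centering at `a` gives at most `2m - 1 ≤ N` points `Γ` with
`d(x, Γ) ^ p ≲ (s / m) ^ p (1 + |x - a| ^ (p + δ) / s ^ (p + δ))`, because
`(1 + 1/β) p = p + δ`. Taking expectations with `s ^ (p + δ) ≥ E|Z - a| ^ (p + δ)` bounds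
`e_{N,p}(Z)` by a multiple of `s / N`, and `s` can be taken arbitrarily close to `σ_{p+δ}(Z)`.
-/

open MeasureTheory

/-- The optimal `L^p`-mean quantization error at level `N` of a real random variable `Z`:
the infimum over all finite grids `Γ ⊂ ℝ` with `|Γ| ≤ N` of
`(E[min_{z ∈ Γ} |Z - z|^p])^{1/p}`. -/
noncomputable def quantErr {Ω : Type*} [MeasurableSpace Ω] (μ : Measure Ω)
    (p : ℝ) (Z : Ω → ℝ) (N : ℕ) : ℝ :=
  sInf { e : ℝ | ∃ (Γ : Finset ℝ) (hΓ : Γ.Nonempty), Γ.card ≤ N ∧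
    e = (∫ ω, Γ.inf' hΓ (fun z => |Z ω - z| ^ p) ∂μ) ^ (1 / p) }

/-- `σ_r(Z) = inf_{a ∈ ℝ} (E[|Z - a|^r])^{1/r}`. -/
noncomputable def sigmaQuant {Ω : Type*} [MeasurableSpace Ω] (μ : Measure Ω)
    (r : ℝ) (Z : Ω → ℝ) : ℝ :=
  ⨅ a : ℝ, (∫ ω, |Z ω - a| ^ r ∂μ) ^ (1 / r)

open Finset Real

lemma rpow_neg_sub_rpow_neg_le {β u v : ℝ} (hβ : 0 ≤ β) (hv : 0 < v) (hvu : v ≤ u) :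
    v ^ (-β) - u ^ (-β) ≤ β * v ^ (-β - 1) * (u - v) := by
  have hu : 0 < u := hv.trans_le hvu
  -- Bernoulli's inequality for the exponent `-β`, through `exp x ≥ 1 + x` and `log x ≤ x - 1`
  have hratio : 1 - β * (u / v - 1) ≤ (u / v) ^ (-β) := by
    rw [rpow_def_of_pos (div_pos hu hv)]
    nlinarith [add_one_le_exp (log (u / v) * -β), log_le_sub_one_of_pos (div_pos hu hv)]
  have hsplit : u ^ (-β) = v ^ (-β) * (u / v) ^ (-β) := by
    rw [div_rpow hu.le hv.le, mul_div_cancel₀ _ (rpow_pos_of_pos hv _).ne']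
  have hv1 : v ^ (-β - 1) = v ^ (-β) / v := rpow_sub_one hv.ne' _
  rw [hsplit, hv1]
  calc v ^ (-β) - v ^ (-β) * (u / v) ^ (-β) = v ^ (-β) * (1 - (u / v) ^ (-β)) := by ring
    _ ≤ v ^ (-β) * (β * (u / v - 1)) := by gcongr; linarith
    _ = β * (v ^ (-β) / v) * (u - v) := by field_simp

noncomputable def powerGrid (β : ℝ) (m : ℕ) : Finset ℝ :=
  (Icc 1 m).image fun j : ℕ => ((j : ℝ) / m) ^ (-β) - 1

lemma zero_mem_powerGrid (β : ℝ) {m : ℕ} (hm : 1 ≤ m) : (0 : ℝ) ∈ powerGrid β m :=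
  mem_image.2 ⟨m, mem_Icc.2 ⟨hm, le_rfl⟩, by
    rw [div_self (by positivity), one_rpow, sub_self]⟩

lemma card_powerGrid_le (β : ℝ) (m : ℕ) : #(powerGrid β m) ≤ m :=
  card_image_le.trans (by simp)

lemma exists_mem_powerGrid_abs_sub_le {β y : ℝ} (hβ : 0 < β) (hy : 0 ≤ y) {m : ℕ}
    (hm : 1 ≤ m) : ∃ g ∈ powerGrid β m, |y - g| ≤ β * (1 + y) ^ (1 + 1 / β) / m := by
  have hm' : (0 : ℝ) < m := by exact_mod_cast hm
  set v := (1 + y) ^ (-(1 / β))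
  have hv : 0 < v := rpow_pos_of_pos (by linarith) _
  have hv1 : v ≤ 1 := rpow_le_one_of_one_le_of_nonpos (by linarith) (by simp [hβ.le])
  have hvy : v ^ (-β) = 1 + y := by
    rw [← rpow_mul (by linarith), neg_mul_neg, one_div_mul_cancel hβ.ne', rpow_one]
  have hvy' : v ^ (-β - 1) = (1 + y) ^ (1 + 1 / β) := by
    rw [← rpow_mul (by linarith)]; congr 1; field_simp; ring
  -- `G v = y`, and `u = ⌈m v⌉ / m` is the first grid abscissa at or above `v`
  set j := ⌈m * v⌉₊
  have hj1 : 1 ≤ j := Nat.one_le_iff_ne_zero.2 (Nat.ceil_pos.2 (by positivity)).ne'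
  have hjm : j ≤ m := Nat.ceil_le.2 (by nlinarith)
  set u := (j : ℝ) / m
  have hvu : v ≤ u := by rw [le_div_iff₀ hm', mul_comm]; exact Nat.le_ceil _
  have hum : u - v ≤ 1 / m := by
    rw [div_sub' hm'.ne', div_le_div_iff_of_pos_right hm']
    linarith [Nat.ceil_lt_add_one (mul_pos hm' hv).le]
  refine ⟨u ^ (-β) - 1, mem_image.2 ⟨j, mem_Icc.2 ⟨hj1, hjm⟩, rfl⟩, ?_⟩
  have hgap := rpow_neg_sub_rpow_neg_le hβ.le hv hvu
  have hmono : u ^ (-β) ≤ v ^ (-β) := rpow_le_rpow_of_nonpos hv hvu (by linarith)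
  rw [hvy, hvy'] at hgap
  rw [hvy] at hmono
  rw [abs_of_nonneg (by linarith)]
  calc y - (u ^ (-β) - 1) ≤ β * (1 + y) ^ (1 + 1 / β) * (u - v) := by linarith
    _ ≤ β * (1 + y) ^ (1 + 1 / β) * (1 / m) := by gcongr
    _ = β * (1 + y) ^ (1 + 1 / β) / m := by ring

noncomputable def symmPowerGrid (β : ℝ) (m : ℕ) : Finset ℝ :=
  powerGrid β m ∪ (powerGrid β m).image Neg.neg

lemma card_symmPowerGrid_add_one_le (β : ℝ) {m : ℕ} (hm : 1 ≤ m) :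
    #(symmPowerGrid β m) + 1 ≤ 2 * m := by
  have h0 : (0 : ℝ) ∈ powerGrid β m ∩ (powerGrid β m).image Neg.neg :=
    mem_inter.2 ⟨zero_mem_powerGrid β hm, mem_image.2 ⟨0, zero_mem_powerGrid β hm, neg_zero⟩⟩
  have hinter := card_pos.2 ⟨0, h0⟩
  have hunion := card_union_add_card_inter (powerGrid β m) ((powerGrid β m).image Neg.neg)
  have himage := card_image_le (s := powerGrid β m) (f := Neg.neg)
  have hcard := card_powerGrid_le β m
  unfold symmPowerGrid
  omega

lemma exists_mem_symmPowerGrid_abs_sub_le {β : ℝ} (hβ : 0 < β) (x : ℝ) {m : ℕ}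
    (hm : 1 ≤ m) : ∃ g ∈ symmPowerGrid β m, |x - g| ≤ β * (1 + |x|) ^ (1 + 1 / β) / m := by
  obtain ⟨g, hg, hxg⟩ := exists_mem_powerGrid_abs_sub_le hβ (abs_nonneg x) hm
  rcases le_total 0 x with hx | hx
  · exact ⟨g, mem_union_left _ hg, by rwa [abs_of_nonneg hx] at hxg ⊢⟩
  · refine ⟨-g, mem_union_right _ (mem_image_of_mem _ hg), ?_⟩
    rw [abs_of_nonpos hx] at hxg
    rwa [abs_of_nonpos hx, show x - -g = -(-x - g) by ring, abs_neg]

lemma Real.add_rpow_le_two_rpow_mul_rpow_add_rpow {a b p : ℝ} (ha : 0 ≤ a) (hb : 0 ≤ b)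
    (hp : 0 ≤ p) : (a + b) ^ p ≤ 2 ^ p * (a ^ p + b ^ p) := calc
  (a + b) ^ p ≤ (2 * max a b) ^ p := by
    gcongr; rw [two_mul]; exact add_le_add (le_max_left _ _) (le_max_right _ _)
  _ = 2 ^ p * max a b ^ p := mul_rpow zero_le_two (ha.trans (le_max_left _ _))
  _ ≤ 2 ^ p * (a ^ p + b ^ p) := by
    gcongr
    rcases le_total a b with h | h
    · rw [max_eq_right h]; linarith [rpow_nonneg ha p]
    · rw [max_eq_left h]; linarith [rpow_nonneg hb p]

lemma quantErr_le_of_card_le {Ω : Type*} [MeasurableSpace Ω] (μ : Measure Ω) (p : ℝ)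
    (Z : Ω → ℝ) {N : ℕ} {Γ : Finset ℝ} (hΓ : Γ.Nonempty) (hcard : #Γ ≤ N) :
    quantErr μ p Z N ≤ (∫ ω, Γ.inf' hΓ (fun z => |Z ω - z| ^ p) ∂μ) ^ (1 / p) := by
  refine csInf_le ⟨0, ?_⟩ ⟨Γ, hΓ, hcard, rfl⟩
  rintro e ⟨Γ, hΓ, -, rfl⟩
  exact rpow_nonneg
    (integral_nonneg fun ω => le_inf' hΓ _ fun z _ => rpow_nonneg (abs_nonneg _) p) _

lemma inf'_symmPowerGrid_rpow_abs_sub_le {p δ s : ℝ} (hp : 0 < p) (hδ : 0 < δ) (hs : 0 < s)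
    {m : ℕ} (hm : 1 ≤ m) (a x : ℝ)
    (hΓ : ((symmPowerGrid (p / δ) m).image fun g => a + s * g).Nonempty) :
    ((symmPowerGrid (p / δ) m).image fun g => a + s * g).inf' hΓ (fun z => |x - z| ^ p) ≤
      (p / δ * s / m) ^ p * 2 ^ (p + δ) * (1 + |x - a| ^ (p + δ) / s ^ (p + δ)) := by
  set t := |x - a| / s
  have ht : 0 ≤ t := by positivity
  obtain ⟨g, hg, hcov⟩ := exists_mem_symmPowerGrid_abs_sub_le (div_pos hp hδ) ((x - a) / s) hm
  rw [abs_div, abs_of_pos hs] at hcov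
  have hdist : |x - (a + s * g)| ≤ p / δ * s / m * (1 + t) ^ (1 + 1 / (p / δ)) := by
    calc |x - (a + s * g)| = |s * ((x - a) / s - g)| := by congr 1; field_simp; ring
      _ = s * |(x - a) / s - g| := by rw [abs_mul, abs_of_pos hs]
      _ ≤ s * (p / δ * (1 + t) ^ (1 + 1 / (p / δ)) / m) := by gcongr
      _ = p / δ * s / m * (1 + t) ^ (1 + 1 / (p / δ)) := by ring
  have hexp : (1 + 1 / (p / δ)) * p = p + δ := by field_simp
  calc _ ≤ |x - (a + s * g)| ^ p := inf'_le _ (mem_image_of_mem _ hg)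
    _ ≤ (p / δ * s / m * (1 + t) ^ (1 + 1 / (p / δ))) ^ p := by gcongr
    _ = (p / δ * s / m) ^ p * (1 + t) ^ (p + δ) := by
        rw [mul_rpow (by positivity) (by positivity), ← rpow_mul (by positivity), hexp]
    _ ≤ (p / δ * s / m) ^ p * (2 ^ (p + δ) * (1 ^ (p + δ) + t ^ (p + δ))) := by
        gcongr
        exact Real.add_rpow_le_two_rpow_mul_rpow_add_rpow zero_le_one ht (by linarith)
    _ = _ := by rw [one_rpow, div_rpow (abs_nonneg _) hs.le]; ring

lemma integrable_abs_sub_rpow {Ω : Type*} [MeasurableSpace Ω] {μ : Measure Ω}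
    [IsFiniteMeasure μ] {Z : Ω → ℝ} {r : ℝ} (hr : 0 < r) (hZ : MemLp Z (ENNReal.ofReal r) μ)
    (a : ℝ) :
    Integrable (fun ω => |Z ω - a| ^ r) μ := by
  have h := (hZ.sub (memLp_const a)).integrable_norm_rpow (by simpa using hr)
    ENNReal.ofReal_ne_top
  simpa [Real.norm_eq_abs, ENNReal.toReal_ofReal hr.le] using h

lemma quantErr_le_of_integral_rpow_le {Ω : Type*} [MeasurableSpace Ω] {μ : Measure Ω}
    [IsProbabilityMeasure μ] {p δ : ℝ} (hp : 0 < p) (hδ : 0 < δ) {Z : Ω → ℝ}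
    (hZ : MemLp Z (ENNReal.ofReal (p + δ)) μ) {N m : ℕ} (hm : 1 ≤ m) (hmN : 2 * m ≤ N + 1)
    {a s : ℝ} (hs : 0 < s) (hmom : ∫ ω, |Z ω - a| ^ (p + δ) ∂μ ≤ s ^ (p + δ)) :
    quantErr μ p Z N ≤ (2 ^ (p + δ + 1)) ^ (1 / p) * (p / δ * s / m) := by
  set Γ := (symmPowerGrid (p / δ) m).image fun g => a + s * g
  have hΓ : Γ.Nonempty :=
    ⟨a + s * 0, mem_image_of_mem _ (mem_union_left _ (zero_mem_powerGrid _ hm))⟩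
  have hcard : #Γ ≤ N :=
    card_image_le.trans (by have := card_symmPowerGrid_add_one_le (p / δ) hm; omega)
  set K := (p / δ * s / m) ^ p * 2 ^ (p + δ)
  have hInt := integrable_abs_sub_rpow (by linarith) hZ a
  have hsr : 0 < s ^ (p + δ) := rpow_pos_of_pos hs _
  have hmean : ∫ ω, Γ.inf' hΓ (fun z => |Z ω - z| ^ p) ∂μ ≤ K * 2 := calc
    _ ≤ ∫ ω, K * (1 + |Z ω - a| ^ (p + δ) / s ^ (p + δ)) ∂μ :=
        integral_mono_of_nonneg
          (ae_of_all _ fun ω => le_inf' hΓ _ fun z _ => rpow_nonneg (abs_nonneg _) p)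
          (((integrable_const 1).add (hInt.div_const _)).const_mul K)
          (ae_of_all _ fun ω => inf'_symmPowerGrid_rpow_abs_sub_le hp hδ hs hm a (Z ω) hΓ)
    _ = K * (1 + (∫ ω, |Z ω - a| ^ (p + δ) ∂μ) / s ^ (p + δ)) := by
        rw [integral_const_mul, integral_add (integrable_const 1) (hInt.div_const _),
          integral_div]
        simp
    _ ≤ K * 2 := by
        gcongr
        linarith [(div_le_one hsr).2 hmom]
  calc quantErr μ p Z N ≤ (∫ ω, Γ.inf' hΓ (fun z => |Z ω - z| ^ p) ∂μ) ^ (1 / p) :=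
        quantErr_le_of_card_le μ p Z hΓ hcard
    _ ≤ (K * 2) ^ (1 / p) := by
        gcongr
        exact integral_nonneg fun ω => le_inf' hΓ _ fun z _ => rpow_nonneg (abs_nonneg _) p
    _ = (2 ^ (p + δ + 1)) ^ (1 / p) * (p / δ * s / m) := by
        rw [mul_assoc, ← rpow_add_one two_ne_zero, mul_comm,
          mul_rpow (by positivity) (by positivity), ← rpow_mul (x := p / δ * s / m) (by positivity),
          mul_one_div_cancel hp.ne', rpow_one]

noncomputable def zadorConst (p δ : ℝ) : ℝ := 2 * (2 ^ (p + δ + 1)) ^ (1 / p) * (p / δ)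

lemma zadorConst_pos {p δ : ℝ} (hp : 0 < p) (hδ : 0 < δ) : 0 < zadorConst p δ := by
  unfold zadorConst; positivity

lemma quantErr_le_of_sigmaQuant_lt {Ω : Type*} [MeasurableSpace Ω] {μ : Measure Ω}
    [IsProbabilityMeasure μ] {p δ : ℝ} (hp : 0 < p) (hδ : 0 < δ) {Z : Ω → ℝ}
    (hZ : MemLp Z (ENNReal.ofReal (p + δ)) μ) {N : ℕ} (hN : 1 ≤ N) {s : ℝ}
    (hs : sigmaQuant μ (p + δ) Z < s) : quantErr μ p Z N ≤ zadorConst p δ * s * (N : ℝ)⁻¹ := by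
  obtain ⟨a, ha⟩ := exists_lt_of_ciInf_lt hs
  have hr : 0 < p + δ := by linarith
  have hmom0 : 0 ≤ ∫ ω, |Z ω - a| ^ (p + δ) ∂μ :=
    integral_nonneg fun ω => rpow_nonneg (abs_nonneg _) _
  have hs0 : 0 < s := (rpow_nonneg hmom0 _).trans_lt ha
  rw [one_div, rpow_inv_lt_iff_of_pos hmom0 hs0.le hr] at ha
  obtain ⟨m, hm, hmN, hNm⟩ : ∃ m : ℕ, 1 ≤ m ∧ 2 * m ≤ N + 1 ∧ N ≤ 2 * m :=
    ⟨(N + 1) / 2, by omega, by omega, by omega⟩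
  have hNm' : (N : ℝ) ≤ 2 * m := by exact_mod_cast hNm
  have hN0 : (0 : ℝ) < N := by exact_mod_cast hN
  calc quantErr μ p Z N ≤ (2 ^ (p + δ + 1)) ^ (1 / p) * (p / δ * s / m) :=
        quantErr_le_of_integral_rpow_le hp hδ hZ hm hmN hs0 ha.le
    _ ≤ (2 ^ (p + δ + 1)) ^ (1 / p) * (p / δ * s / (N / 2)) := by
        gcongr; linarith
    _ = zadorConst p δ * s * (N : ℝ)⁻¹ := by unfold zadorConst; field_simp

/-- **Zador's theorem, non-asymptotic upper bound (Pierce's lemma, one-dimensional case).**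
For every `p ∈ (0,∞)` and `δ > 0` there is a constant `C_{p,δ} ∈ (0,∞)` such that for every
real random variable `Z ∈ L^{p+δ}(ℙ)` and every `N ≥ 1`,
`e_{N,p}(Z) ≤ C_{p,δ} · σ_{p+δ}(Z) · N⁻¹`. -/
theorem zador_nonasymptotic_upper_bound (p δ : ℝ) (hp : 0 < p) (hδ : 0 < δ) :
    ∃ C : ℝ, 0 < C ∧
      ∀ (Ω : Type) (mΩ : MeasurableSpace Ω) (ℙ : Measure Ω), IsProbabilityMeasure ℙ →
        ∀ Z : Ω → ℝ, Measurable Z → MemLp Z (ENNReal.ofReal (p + δ)) ℙ →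
          ∀ N : ℕ, 1 ≤ N →
            quantErr ℙ p Z N ≤ C * sigmaQuant ℙ (p + δ) Z * (N : ℝ)⁻¹ := by
  refine ⟨zadorConst p δ, zadorConst_pos hp hδ, fun Ω _ ℙ _ Z _ hZ N hN => ?_⟩
  have hc : 0 < zadorConst p δ * (N : ℝ)⁻¹ :=
    mul_pos (zadorConst_pos hp hδ) (inv_pos.2 (by exact_mod_cast hN))
  have h : quantErr ℙ p Z N / (zadorConst p δ * (N : ℝ)⁻¹) ≤ sigmaQuant ℙ (p + δ) Z :=
    le_of_forall_gt_imp_ge_of_dense fun s hs => (div_le_iff₀ hc).2 <|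
      (quantErr_le_of_sigmaQuant_lt hp hδ hZ hN hs).trans_eq (by ring)
  rw [div_le_iff₀ hc] at h
  linarith
end

section
/- Let ψ : ℝ → ℝ be bounded and Lipschitz continuous with Lipschitz constant L, and suppose there exists M > 0 such that ψ is constant on [M, ∞). Let φ_d > 0 and K > 0 be constants and define h : ℝ² → ℝ by h(x, y) = φ_d · e^{−y} · ψ(K e^{x+y}). Then, setting L̄ = φ_d · L · M, for every x, x', y, y' ∈ ℝ: |h(x, y) − h(x', y')| ≤ e^{max(|y|, |y'|)} · ( L̄ |x − x'| + (φ_d ‖ψ‖_∞ + L̄) |y − y'| ), where ‖ψ‖_∞ = sup_{ξ∈ℝ} |ψ(ξ)|. -/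
open Real

private lemma exp_sub_le' (s t : ℝ) (h : s ≤ t) : exp t - exp s ≤ exp t * (t - s) := by
  have h1 : exp s = exp t * exp (s - t) := by rw [← Real.exp_add]; ring_nf
  have h2 : (s - t) + 1 ≤ exp (s - t) := Real.add_one_le_exp _
  nlinarith [exp_pos t]

private lemma abs_exp_sub_exp (s t : ℝ) :
    |exp s - exp t| ≤ max (exp s) (exp t) * |s - t| := by
  rcases le_total s t with h | h
  · rw [abs_sub_comm, abs_of_nonneg (by nlinarith [exp_le_exp.2 h] : (0:ℝ) ≤ exp t - exp s),
      abs_sub_comm, abs_of_nonneg (by linarith : (0:ℝ) ≤ t - s)]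
    calc exp t - exp s ≤ exp t * (t - s) := exp_sub_le' s t h
      _ ≤ max (exp s) (exp t) * (t - s) := by
          have := le_max_right (exp s) (exp t); nlinarith
  · rw [abs_of_nonneg (by nlinarith [exp_le_exp.2 h] : (0:ℝ) ≤ exp s - exp t),
      abs_of_nonneg (by linarith : (0:ℝ) ≤ s - t)]
    calc exp s - exp t ≤ exp s * (s - t) := exp_sub_le' t s h
      _ ≤ max (exp s) (exp t) * (s - t) := by
          have := le_max_left (exp s) (exp t); nlinarith

private lemma min_exp_lip_core (c a b : ℝ) (hc : 0 < c) (h : a ≤ b) :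
    min (exp b) c - min (exp a) c ≤ c * (b - a) := by
  rcases le_or_gt (exp b) c with hb | hb
  · have ha : exp a ≤ c := le_trans (exp_le_exp.2 h) hb
    rw [min_eq_left hb, min_eq_left ha]
    calc exp b - exp a ≤ exp b * (b - a) := exp_sub_le' a b h
      _ ≤ c * (b - a) := by nlinarith
  · rcases le_or_gt (exp a) c with ha | ha
    · rw [min_eq_right hb.le, min_eq_left ha]
      have h1 : a ≤ Real.log c := (Real.le_log_iff_exp_le hc).2 ha
      have h2 : Real.log c ≤ b := ((Real.log_le_iff_le_exp hc).2 hb.le)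
      have h3 := exp_sub_le' a (Real.log c) h1
      rw [Real.exp_log hc] at h3
      nlinarith
    · rw [min_eq_right hb.le, min_eq_right ha.le]
      nlinarith

private lemma min_exp_lip (c a b : ℝ) (hc : 0 < c) :
    |min (exp a) c - min (exp b) c| ≤ c * |a - b| := by
  rcases le_total a b with h | h
  · have h1 := min_exp_lip_core c a b hc h
    have h2 : min (exp a) c ≤ min (exp b) c :=
      min_le_min (exp_le_exp.2 h) le_rfl
    rw [abs_sub_comm, abs_of_nonneg (by linarith), abs_sub_comm,
      abs_of_nonneg (by linarith : (0:ℝ) ≤ b - a)]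
    linarith
  · have h1 := min_exp_lip_core c b a hc h
    have h2 : min (exp b) c ≤ min (exp a) c :=
      min_le_min (exp_le_exp.2 h) le_rfl
    rw [abs_of_nonneg (by linarith), abs_of_nonneg (by linarith : (0:ℝ) ≤ a - b)]
    linarith

/-- Local Lipschitz regularity of the discounted obstacle function
`h(x, y) = φ_d · e^{-y} · ψ(K e^{x+y})` associated with a PRDC-type payoff `ψ`
(bounded, `L`-Lipschitz, and constant on `[M, ∞)`).  With `L̄ = φ_d · L · M`:
`|h(x,y) − h(x',y')| ≤ e^{max(|y|,|y'|)} (L̄ |x−x'| + (φ_d ‖ψ‖_∞ + L̄) |y−y'|)`. -/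
theorem obstacle_local_lipschitz (ψ : ℝ → ℝ) (L M φd K : ℝ)
    (hbdd : BddAbove (Set.range fun ξ => |ψ ξ|))
    (hlip : ∀ x x' : ℝ, |ψ x - ψ x'| ≤ L * |x - x'|)
    (hM : 0 < M)
    (hconst : ∀ x y : ℝ, M ≤ x → M ≤ y → ψ x = ψ y)
    (hφd : 0 < φd) (hK : 0 < K) :
    ∀ x x' y y' : ℝ,
      |φd * exp (-y) * ψ (K * exp (x + y)) - φd * exp (-y') * ψ (K * exp (x' + y'))|
        ≤ exp (max |y| |y'|) *
            ((φd * L * M) * |x - x'| +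
              (φd * (⨆ ξ : ℝ, |ψ ξ|) + φd * L * M) * |y - y'|) := by
  intro x x' y y'
  set S := ⨆ ξ : ℝ, |ψ ξ| with hSdef
  have hL : 0 ≤ L := by
    have := hlip 0 1
    have h0 : |(0:ℝ) - 1| = 1 := by norm_num
    rw [h0, mul_one] at this
    exact le_trans (abs_nonneg _) this
  have hSb : ∀ ξ : ℝ, |ψ ξ| ≤ S := fun ξ => le_ciSup hbdd ξ
  have hS0 : 0 ≤ S := le_trans (abs_nonneg _) (hSb 0)
  -- ψ's variation is controlled by min(·, M)
  have hpsimin : ∀ a b : ℝ, |ψ a - ψ b| ≤ L * |min a M - min b M| := by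
    intro a b
    rcases le_or_gt M a with ha | ha <;> rcases le_or_gt M b with hb | hb
    · rw [hconst a b ha hb]; simp; positivity
    · rw [hconst a M ha le_rfl, min_eq_right ha, min_eq_left hb.le]
      exact hlip M b
    · rw [hconst b M hb le_rfl, min_eq_left ha.le, min_eq_right hb]
      exact hlip a M
    · rw [min_eq_left ha.le, min_eq_left hb.le]; exact hlip a b
  have hrw : ∀ u : ℝ, K * exp u = exp (Real.log K + u) := by
    intro u; rw [Real.exp_add, Real.exp_log hK]
  set A := ψ (K * exp (x + y)) with hA
  set B := ψ (K * exp (x' + y')) with hB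
  have hAB : |A - B| ≤ L * M * (|x - x'| + |y - y'|) := by
    have h1 := hpsimin (K * exp (x + y)) (K * exp (x' + y'))
    rw [← hA, ← hB, hrw (x + y), hrw (x' + y')] at h1
    have h2 := min_exp_lip M (Real.log K + (x + y)) (Real.log K + (x' + y')) hM
    have h3 : |Real.log K + (x + y) - (Real.log K + (x' + y'))| ≤ |x - x'| + |y - y'| := by
      have : Real.log K + (x + y) - (Real.log K + (x' + y')) = (x - x') + (y - y') := by ring
      rw [this]
      exact abs_add_le _ _
    calc |A - B| ≤ L * |min (exp (Real.log K + (x + y))) M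
          - min (exp (Real.log K + (x' + y'))) M| := h1
      _ ≤ L * (M * |Real.log K + (x + y) - (Real.log K + (x' + y'))|) :=
          mul_le_mul_of_nonneg_left h2 hL
      _ ≤ L * (M * (|x - x'| + |y - y'|)) := by
          apply mul_le_mul_of_nonneg_left _ hL
          exact mul_le_mul_of_nonneg_left h3 hM.le
      _ = L * M * (|x - x'| + |y - y'|) := by ring
  set E := exp (max |y| |y'|) with hE
  have e1 : exp (-y) ≤ E := exp_le_exp.2 (le_trans (neg_le_abs y) (le_max_left _ _))
  have e2 : exp (-y') ≤ E := exp_le_exp.2 (le_trans (neg_le_abs y') (le_max_right _ _))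
  have e3 : |exp (-y) - exp (-y')| ≤ E * |y - y'| := by
    have h1 := abs_exp_sub_exp (-y) (-y')
    have h2 : |(-y) - (-y')| = |y - y'| := by rw [abs_sub_comm]; ring_nf
    have h3 : max (exp (-y)) (exp (-y')) ≤ E := max_le e1 e2
    rw [h2] at h1
    calc |exp (-y) - exp (-y')| ≤ max (exp (-y)) (exp (-y')) * |y - y'| := h1
      _ ≤ E * |y - y'| := mul_le_mul_of_nonneg_right h3 (abs_nonneg _)
  have e4 : |B| ≤ S := hSb _
  have key : φd * exp (-y) * A - φd * exp (-y') * B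
      = φd * exp (-y) * (A - B) + φd * (exp (-y) - exp (-y')) * B := by ring
  have b1 : φd * exp (-y) * |A - B| ≤ φd * E * (L * M * (|x - x'| + |y - y'|)) := by
    apply mul_le_mul (mul_le_mul_of_nonneg_left e1 hφd.le) hAB (abs_nonneg _) (by positivity)
  have b2 : φd * |exp (-y) - exp (-y')| * |B| ≤ φd * (E * |y - y'|) * S := by
    apply mul_le_mul (mul_le_mul_of_nonneg_left e3 hφd.le) e4 (abs_nonneg _) (by positivity)
  calc |φd * exp (-y) * A - φd * exp (-y') * B|
      = |φd * exp (-y) * (A - B) + φd * (exp (-y) - exp (-y')) * B| := by rw [key]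
    _ ≤ |φd * exp (-y) * (A - B)| + |φd * (exp (-y) - exp (-y')) * B| := abs_add_le _ _
    _ = φd * exp (-y) * |A - B| + φd * |exp (-y) - exp (-y')| * |B| := by
        rw [abs_mul, abs_mul, abs_mul, abs_mul, abs_of_pos hφd, abs_of_pos (exp_pos _)]
    _ ≤ φd * E * (L * M * (|x - x'| + |y - y'|)) + φd * (E * |y - y'|) * S :=
        add_le_add b1 b2
    _ = E * ((φd * L * M) * |x - x'| + (φd * S + φd * L * M) * |y - y'|) := by ring
end

section
/- Let (Ω, 𝒜, ℙ) be a probability space, let G = (G¹, G², G³, G⁴) : Ω → ℝ⁴ be a random vector, let b ≥ 0, σ_f ≥ 0, σ_d ≥ 0, δ ≥ 0, and set κ̄ = E[exp(|G³| + b|G⁴|)]. Assume κ̄ < ∞ and E[(1 + |G¹| + |G²| + |G³| + |G⁴|) · exp(|G³| + b|G⁴|)] < ∞. Let f : ℝ⁴ → ℝ be measurable and satisfy, for all x, x', u, u', y, y', v, v' ∈ ℝ: |f(x,u,y,v) − f(x',u',y',v')| ≤ (A|x−x'| + B|u−u'| + C|y−y'| + D|v−v'|) · e^{max(|y|,|y'|)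 + b·max(|v|,|v'|)}, with A, B, C, D ≥ 0, and assume f(x + σ_f δ u + G¹, u + G², y − σ_d δ v + G³, v + G⁴) is integrable for each (x,u,y,v). Define P f(x,u,y,v) = E[f(x + σ_f δ u + G¹, u + G², y − σ_d δ v + G³, v + G⁴)]. Then for all x, x', u, u', y, y', v, v' ∈ ℝ: |P f(x,u,y,v) − P f(x',u',y',v')| ≤ (Ã|x−x'| + B̃|u−u'| + C̃|y−y'| + D̃|v−v'|) · e^{max(|y|,|y'|) + b̃·max(|v|,|v'|)}, where Ã = A κ̄, B̃ = (B + A σ_f δ) κ̄, C̃ = C κ̄, D̃ = (D + C σ_d δ) κ̄ and b̃ = b + σ_d δ. -/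
open MeasureTheory Real
set_option maxHeartbeats 1000000 in

/-- **Propagation of the local Lipschitz property through the Markov transition.**
Let `Pf(x,u,y,v) = E[f(x + σ_f δ u + G¹, u + G², y − σ_d δ v + G³, v + G⁴)]`.
If `f` satisfies the local Lipschitz property with parameters `(A,B,C,D,b)`, then `Pf`
satisfies it with parameters `(Ãκ̄, (B+Aσ_fδ)κ̄, Cκ̄, (D+Cσ_dδ)κ̄, b+σ_dδ)` where
`κ̄ = E[exp(|G³| + b|G⁴|)]`. -/
theorem markov_kernel_propagates_local_lipschitz
    {Ω : Type*} [MeasurableSpace Ω] (ℙ : Measure Ω) [IsProbabilityMeasure ℙ]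
    (G1 G2 G3 G4 : Ω → ℝ)
    (hG1 : Measurable G1) (hG2 : Measurable G2) (hG3 : Measurable G3) (hG4 : Measurable G4)
    (b σf σd δ : ℝ) (hb : 0 ≤ b) (hσf : 0 ≤ σf) (hσd : 0 ≤ σd) (hδ : 0 ≤ δ)
    (hκ : Integrable (fun ω => exp (|G3 ω| + b * |G4 ω|)) ℙ)
    (hκ' : Integrable
      (fun ω => (1 + |G1 ω| + |G2 ω| + |G3 ω| + |G4 ω|) * exp (|G3 ω| + b * |G4 ω|)) ℙ)
    (f : ℝ → ℝ → ℝ → ℝ → ℝ)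
    (hfmeas : Measurable fun z : ℝ × ℝ × ℝ × ℝ => f z.1 z.2.1 z.2.2.1 z.2.2.2)
    (A B C D : ℝ) (hA : 0 ≤ A) (hB : 0 ≤ B) (hC : 0 ≤ C) (hD : 0 ≤ D)
    (hf : ∀ x x' u u' y y' v v' : ℝ,
      |f x u y v - f x' u' y' v'| ≤
        (A * |x - x'| + B * |u - u'| + C * |y - y'| + D * |v - v'|) *
          exp (max |y| |y'| + b * max |v| |v'|))
    (hint : ∀ x u y v : ℝ, Integrable
      (fun ω => f (x + σf * δ * u + G1 ω) (u + G2 ω) (y - σd * δ * v + G3 ω) (v + G4 ω)) ℙ) :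
    ∀ x x' u u' y y' v v' : ℝ,
      |(∫ ω, f (x + σf * δ * u + G1 ω) (u + G2 ω) (y - σd * δ * v + G3 ω) (v + G4 ω) ∂ℙ) -
        (∫ ω, f (x' + σf * δ * u' + G1 ω) (u' + G2 ω) (y' - σd * δ * v' + G3 ω) (v' + G4 ω) ∂ℙ)|
        ≤ ((A * (∫ ω, exp (|G3 ω| + b * |G4 ω|) ∂ℙ)) * |x - x'| +
            ((B + A * σf * δ) * (∫ ω, exp (|G3 ω| + b * |G4 ω|) ∂ℙ)) * |u - u'| +
            (C * (∫ ω, exp (|G3 ω| + b * |G4 ω|) ∂ℙ)) * |y - y'| +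
            ((D + C * σd * δ) * (∫ ω, exp (|G3 ω| + b * |G4 ω|) ∂ℙ)) * |v - v'|) *
          exp (max |y| |y'| + (b + σd * δ) * max |v| |v'|) := by
  intro x x' u u' y y' v v'
  have hκ0 : 0 ≤ ∫ ω, exp (|G3 ω| + b * |G4 ω|) ∂ℙ :=
    integral_nonneg fun ω => (Real.exp_pos _).le
  set K : ℝ := A * |x - x'| + (B + A * σf * δ) * |u - u'| + C * |y - y'| +
      (D + C * σd * δ) * |v - v'| with hKdef
  have hK0 : 0 ≤ K := by positivity
  set M : ℝ := max |y| |y'| + (b + σd * δ) * max |v| |v'| with hMdef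
  have hbound : ∀ ω,
      |f (x + σf * δ * u + G1 ω) (u + G2 ω) (y - σd * δ * v + G3 ω) (v + G4 ω) -
        f (x' + σf * δ * u' + G1 ω) (u' + G2 ω) (y' - σd * δ * v' + G3 ω) (v' + G4 ω)|
      ≤ K * exp M * exp (|G3 ω| + b * |G4 ω|) := by
    intro ω
    have h1 := hf (x + σf * δ * u + G1 ω) (x' + σf * δ * u' + G1 ω)
      (u + G2 ω) (u' + G2 ω) (y - σd * δ * v + G3 ω) (y' - σd * δ * v' + G3 ω)
      (v + G4 ω) (v' + G4 ω)
    have ha : |x + σf * δ * u + G1 ω - (x' + σf * δ * u' + G1 ω)| ≤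
        |x - x'| + σf * δ * |u - u'| := by
      have : x + σf * δ * u + G1 ω - (x' + σf * δ * u' + G1 ω) =
          (x - x') + σf * δ * (u - u') := by ring
      rw [this]
      calc |(x - x') + σf * δ * (u - u')| ≤ |x - x'| + |σf * δ * (u - u')| := abs_add_le _ _
        _ = |x - x'| + σf * δ * |u - u'| := by
            rw [abs_mul, abs_of_nonneg (by positivity : (0:ℝ) ≤ σf * δ)]
    have hu : |u + G2 ω - (u' + G2 ω)| = |u - u'| := by ring_nf
    have hc : |y - σd * δ * v + G3 ω - (y' - σd * δ * v' + G3 ω)| ≤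
        |y - y'| + σd * δ * |v - v'| := by
      have : y - σd * δ * v + G3 ω - (y' - σd * δ * v' + G3 ω) =
          (y - y') + σd * δ * (v' - v) := by ring
      rw [this]
      calc |(y - y') + σd * δ * (v' - v)| ≤ |y - y'| + |σd * δ * (v' - v)| := abs_add_le _ _
        _ = |y - y'| + σd * δ * |v - v'| := by
            rw [abs_mul, abs_of_nonneg (by positivity : (0:ℝ) ≤ σd * δ), abs_sub_comm v' v]
    have hv : |v + G4 ω - (v' + G4 ω)| = |v - v'| := by ring_nf
    have hcoef : A * |x + σf * δ * u + G1 ω - (x' + σf * δ * u' + G1 ω)| +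
        B * |u + G2 ω - (u' + G2 ω)| +
        C * |y - σd * δ * v + G3 ω - (y' - σd * δ * v' + G3 ω)| +
        D * |v + G4 ω - (v' + G4 ω)| ≤ K := by
      rw [hu, hv, hKdef]
      nlinarith [mul_le_mul_of_nonneg_left ha hA, mul_le_mul_of_nonneg_left hc hC]
    have hexp : max |y - σd * δ * v + G3 ω| |y' - σd * δ * v' + G3 ω| +
        b * max |v + G4 ω| |v' + G4 ω| ≤ M + (|G3 ω| + b * |G4 ω|) := by
      have t1 : |y - σd * δ * v + G3 ω| ≤ max |y| |y'| + σd * δ * max |v| |v'| + |G3 ω| := by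
        calc |y - σd * δ * v + G3 ω| ≤ |y - σd * δ * v| + |G3 ω| := abs_add_le _ _
          _ ≤ (|y| + |σd * δ * v|) + |G3 ω| := by
              linarith [abs_sub y (σd * δ * v)]
          _ ≤ max |y| |y'| + σd * δ * max |v| |v'| + |G3 ω| := by
              rw [abs_mul, abs_of_nonneg (by positivity : (0:ℝ) ≤ σd * δ)]
              have h1 : |y| ≤ max |y| |y'| := le_max_left _ _
              have h2 : |v| ≤ max |v| |v'| := le_max_left _ _
              nlinarith [mul_le_mul_of_nonneg_left h2 (by positivity : (0:ℝ) ≤ σd * δ)]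
      have t2 : |y' - σd * δ * v' + G3 ω| ≤ max |y| |y'| + σd * δ * max |v| |v'| + |G3 ω| := by
        calc |y' - σd * δ * v' + G3 ω| ≤ |y' - σd * δ * v'| + |G3 ω| := abs_add_le _ _
          _ ≤ (|y'| + |σd * δ * v'|) + |G3 ω| := by
              linarith [abs_sub y' (σd * δ * v')]
          _ ≤ max |y| |y'| + σd * δ * max |v| |v'| + |G3 ω| := by
              rw [abs_mul, abs_of_nonneg (by positivity : (0:ℝ) ≤ σd * δ)]
              have h1 : |y'| ≤ max |y| |y'| := le_max_right _ _
              have h2 : |v'| ≤ max |v| |v'| := le_max_right _ _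
              nlinarith [mul_le_mul_of_nonneg_left h2 (by positivity : (0:ℝ) ≤ σd * δ)]
      have t3 : max |v + G4 ω| |v' + G4 ω| ≤ max |v| |v'| + |G4 ω| :=
        max_le (le_trans (abs_add_le _ _) (by gcongr; exact le_max_left _ _))
          (le_trans (abs_add_le _ _) (by gcongr; exact le_max_right _ _))
      have t4 : max |y - σd * δ * v + G3 ω| |y' - σd * δ * v' + G3 ω| ≤
          max |y| |y'| + σd * δ * max |v| |v'| + |G3 ω| := max_le t1 t2
      have := mul_le_mul_of_nonneg_left t3 hb
      rw [hMdef]; nlinarith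
    calc |f (x + σf * δ * u + G1 ω) (u + G2 ω) (y - σd * δ * v + G3 ω) (v + G4 ω) -
        f (x' + σf * δ * u' + G1 ω) (u' + G2 ω) (y' - σd * δ * v' + G3 ω) (v' + G4 ω)|
        ≤ (A * |x + σf * δ * u + G1 ω - (x' + σf * δ * u' + G1 ω)| +
            B * |u + G2 ω - (u' + G2 ω)| +
            C * |y - σd * δ * v + G3 ω - (y' - σd * δ * v' + G3 ω)| +
            D * |v + G4 ω - (v' + G4 ω)|) *
          exp (max |y - σd * δ * v + G3 ω| |y' - σd * δ * v' + G3 ω| +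
            b * max |v + G4 ω| |v' + G4 ω|) := h1
      _ ≤ K * exp (M + (|G3 ω| + b * |G4 ω|)) := by
          apply mul_le_mul hcoef (exp_le_exp.2 hexp) (exp_pos _).le hK0
      _ = K * exp M * exp (|G3 ω| + b * |G4 ω|) := by rw [exp_add]; ring
  have key : |(∫ ω, f (x + σf * δ * u + G1 ω) (u + G2 ω) (y - σd * δ * v + G3 ω) (v + G4 ω) ∂ℙ) -
      (∫ ω, f (x' + σf * δ * u' + G1 ω) (u' + G2 ω) (y' - σd * δ * v' + G3 ω) (v' + G4 ω) ∂ℙ)|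
      ≤ K * exp M * ∫ ω, exp (|G3 ω| + b * |G4 ω|) ∂ℙ := by
    rw [← integral_sub (hint x u y v) (hint x' u' y' v')]
    calc |∫ ω, (f (x + σf * δ * u + G1 ω) (u + G2 ω) (y - σd * δ * v + G3 ω) (v + G4 ω) -
          f (x' + σf * δ * u' + G1 ω) (u' + G2 ω) (y' - σd * δ * v' + G3 ω) (v' + G4 ω)) ∂ℙ|
        ≤ ∫ ω, |f (x + σf * δ * u + G1 ω) (u + G2 ω) (y - σd * δ * v + G3 ω) (v + G4 ω) -
          f (x' + σf * δ * u' + G1 ω) (u' + G2 ω) (y' - σd * δ * v' + G3 ω) (v' + G4 ω)| ∂ℙ :=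
          by
            simpa [Real.norm_eq_abs] using norm_integral_le_integral_norm (μ := ℙ)
              (fun ω => f (x + σf * δ * u + G1 ω) (u + G2 ω) (y - σd * δ * v + G3 ω) (v + G4 ω) -
                f (x' + σf * δ * u' + G1 ω) (u' + G2 ω) (y' - σd * δ * v' + G3 ω) (v' + G4 ω))
      _ ≤ ∫ ω, K * exp M * exp (|G3 ω| + b * |G4 ω|) ∂ℙ := by
          apply integral_mono (((hint x u y v).sub (hint x' u' y' v')).abs)
            (hκ.const_mul _) hbound
      _ = K * exp M * ∫ ω, exp (|G3 ω| + b * |G4 ω|) ∂ℙ := integral_const_mul _ _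
  calc _ ≤ K * exp M * ∫ ω, exp (|G3 ω| + b * |G4 ω|) ∂ℙ := key
    _ = _ := by rw [hKdef, hMdef]; ring
end

section
/- Let (Ω, 𝒜, ℙ) be a probability space, G = (G¹, G², G³, G⁴) : Ω → ℝ⁴ a random vector, b ≥ 0, σ_f, σ_d, δ ≥ 0 with κ̄ = E[exp(|G³| + b|G⁴|)] < ∞ and E[(1+|G|)·exp(|G³| + b|G⁴|)] < ∞. Let v : ℝ⁴ → ℝ be measurable satisfying the local Lipschitz property with parameters (A, B, C, D, b), i.e. |v(x,u,y,w) − v(x',u',y',w')| ≤ (A|x−x'| + B|u−u'| + C|y−y'| + D|w−w'|) e^{max(|y|,|y'|) + b·max(|w|,|w'|)}, and assume the integrals defining P v(x,u,y,w) = E[v(x + σ_f δ u + G¹, u + G², y − σ_d δ w + G³, w + G⁴)] exist. Let h : ℝ² → ℝ satisfy |h(x,y) − h(x',y')| ≤ e^{max(|y|,|y'|)}(α|x−x'| + γ|y−y'|) with α, γ ≥ 0. Then the function V(x,u,y,w) := max( h(x,y), P v(x,u,y,w) ) satisfies the local Lipschitz property with parameters ( max(α, A κ̄), (B + A σ_f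 δ) κ̄, max(γ, C κ̄), (D + C σ_d δ) κ̄, b + σ_d δ ), i.e. |V(x,u,y,w) − V(x',u',y',w')| ≤ ( max(α, Aκ̄)|x−x'| + (B+Aσ_fδ)κ̄|u−u'| + max(γ, Cκ̄)|y−y'| + (D+Cσ_dδ)κ̄|w−w'| ) e^{max(|y|,|y'|) + (b+σ_dδ)·max(|w|,|w'|)}. -/
open MeasureTheory Real

/-!
The transition shifts `(x, u, y, w)` by `(σ_f δ u, 0, -σ_d δ w, 0)` plus the noise `G`. Pointwise in
the noise, the local Lipschitz bound of `v` therefore turns into one for the shifted function, with the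
drift feeding `A σ_f δ |u - u'|` and `C σ_d δ |w - w'|` into the increments and `σ_d δ max(|w|, |w'|)`
into the exponent, while the noise contributes the factor `exp(|G³| + b |G⁴|)`; integrating it yields
`κ̄`. The payoff `h` satisfies a bound of the same shape with smaller parameters, and the property
passes to the maximum of two functions since `|max a c - max b d| ≤ max |a - b| |c - d|`.
-/

def LocalLipschitzProperty (A B C D b : ℝ) (f : ℝ → ℝ → ℝ → ℝ → ℝ) : Prop :=
  ∀ x x' u u' y y' w w' : ℝ,
    |f x u y w - f x' u' y' w'| ≤
      (A * |x - x'| + B * |u - u'| + C * |y - y'| + D * |w - w'|) *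
        exp (max |y| |y'| + b * max |w| |w'|)

-- The operator `P` of the paper, with `r = σ_f δ` and `s = σ_d δ`.
noncomputable def markovStep {Ω : Type*} [MeasurableSpace Ω] (μ : Measure Ω)
    (G1 G2 G3 G4 : Ω → ℝ) (r s : ℝ) (v : ℝ → ℝ → ℝ → ℝ → ℝ) (x u y w : ℝ) : ℝ :=
  ∫ ω, v (x + r * u + G1 ω) (u + G2 ω) (y - s * w + G3 ω) (w + G4 ω) ∂μ

lemma max_abs_add_le (a a' c : ℝ) : max |a + c| |a' + c| ≤ max |a| |a'| + |c| :=
  (max_le_max (abs_add_le a c) (abs_add_le a' c)).trans_eq (max_add_add_right _ _ _)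

lemma max_abs_sub_mul_le {s : ℝ} (hs : 0 ≤ s) (y y' w w' : ℝ) :
    max |y - s * w| |y' - s * w'| ≤ max |y| |y'| + s * max |w| |w'| := by
  have habs (a c : ℝ) : |a - s * c| ≤ |a| + s * |c| :=
    (abs_sub _ _).trans_eq (by rw [abs_mul, abs_of_nonneg hs])
  calc max |y - s * w| |y' - s * w'| ≤ max (|y| + s * |w|) (|y'| + s * |w'|) :=
        max_le_max (habs y w) (habs y' w')
    _ ≤ max |y| |y'| + max (s * |w|) (s * |w'|) := max_add_add_le_max_add_max
    _ = max |y| |y'| + s * max |w| |w'| := by rw [mul_max_of_nonneg _ _ hs]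

lemma exponent_shift_le {b s : ℝ} (hb : 0 ≤ b) (hs : 0 ≤ s) (y y' w w' g3 g4 : ℝ) :
    max |y - s * w + g3| |y' - s * w' + g3| + b * max |w + g4| |w' + g4| ≤
      max |y| |y'| + (b + s) * max |w| |w'| + (|g3| + b * |g4|) := by
  have hy := max_abs_add_le (y - s * w) (y' - s * w') g3
  have hy' := max_abs_sub_mul_le hs y y' w w'
  have hw := mul_le_mul_of_nonneg_left (max_abs_add_le w w' g4) hb
  linarith

lemma weighted_dist_shift_le {A B C D r s : ℝ} (hA : 0 ≤ A) (hC : 0 ≤ C) (hr : 0 ≤ r)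
    (hs : 0 ≤ s) (x x' u u' y y' w w' g1 g2 g3 g4 : ℝ) :
    A * |(x + r * u + g1) - (x' + r * u' + g1)| + B * |(u + g2) - (u' + g2)| +
        C * |(y - s * w + g3) - (y' - s * w' + g3)| + D * |(w + g4) - (w' + g4)| ≤
      A * |x - x'| + (B + A * r) * |u - u'| + C * |y - y'| + (D + C * s) * |w - w'| := by
  have hx : |(x + r * u + g1) - (x' + r * u' + g1)| ≤ |x - x'| + r * |u - u'| := by
    rw [show x + r * u + g1 - (x' + r * u' + g1) = (x - x') + r * (u - u') by ring]
    exact (abs_add_le _ _).trans_eq (by rw [abs_mul, abs_of_nonneg hr])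
  have hy : |(y - s * w + g3) - (y' - s * w' + g3)| ≤ |y - y'| + s * |w - w'| := by
    rw [show y - s * w + g3 - (y' - s * w' + g3) = (y - y') - s * (w - w') by ring]
    exact (abs_sub _ _).trans_eq (by rw [abs_mul, abs_of_nonneg hs])
  rw [add_sub_add_right_eq_sub u u' g2, add_sub_add_right_eq_sub w w' g4]
  linarith [mul_le_mul_of_nonneg_left hx hA, mul_le_mul_of_nonneg_left hy hC]

namespace LocalLipschitzProperty

variable {A B C D b : ℝ} {f g : ℝ → ℝ → ℝ → ℝ → ℝ}

lemma mono (hf : LocalLipschitzProperty A B C D b f) {A' B' C' D' b' : ℝ} (hA : A ≤ A')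
    (hB : B ≤ B') (hC : C ≤ C') (hD : D ≤ D') (hb : b ≤ b') :
    LocalLipschitzProperty A' B' C' D' b' f := by
  intro x x' u u' y y' w w'
  have hbound := hf x x' u u' y y' w w'
  have hcoeff : 0 ≤ A * |x - x'| + B * |u - u'| + C * |y - y'| + D * |w - w'| :=
    nonneg_of_mul_nonneg_left ((abs_nonneg _).trans hbound) (exp_pos _)
  have hle : A * |x - x'| + B * |u - u'| + C * |y - y'| + D * |w - w'| ≤
      A' * |x - x'| + B' * |u - u'| + C' * |y - y'| + D' * |w - w'| := by gcongr
  refine hbound.trans (mul_le_mul hle ?_ (exp_pos _).le (hcoeff.trans hle))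
  gcongr

lemma of_two_vars {h : ℝ → ℝ → ℝ} {α γ : ℝ}
    (hh : ∀ x x' y y' : ℝ, |h x y - h x' y'| ≤ exp (max |y| |y'|) * (α * |x - x'| + γ * |y - y'|)) :
    LocalLipschitzProperty α 0 γ 0 0 fun x _ y _ => h x y := by
  intro x x' u u' y y' w w'
  simpa [mul_comm] using hh x x' y y'

lemma abs_sub_shift_le (hv : LocalLipschitzProperty A B C D b f) (hA : 0 ≤ A) (hB : 0 ≤ B)
    (hC : 0 ≤ C) (hD : 0 ≤ D) (hb : 0 ≤ b) {r s : ℝ} (hr : 0 ≤ r) (hs : 0 ≤ s)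
    (x x' u u' y y' w w' g1 g2 g3 g4 : ℝ) :
    |f (x + r * u + g1) (u + g2) (y - s * w + g3) (w + g4) -
        f (x' + r * u' + g1) (u' + g2) (y' - s * w' + g3) (w' + g4)| ≤
      (A * |x - x'| + (B + A * r) * |u - u'| + C * |y - y'| + (D + C * s) * |w - w'|) *
        exp (max |y| |y'| + (b + s) * max |w| |w'|) * exp (|g3| + b * |g4|) := by
  rw [mul_assoc, ← exp_add]
  refine (hv _ _ _ _ _ _ _ _).trans ?_
  gcongr ?_ * exp ?_
  · exact weighted_dist_shift_le hA hC hr hs x x' u u' y y' w w' g1 g2 g3 g4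
  · exact exponent_shift_le hb hs y y' w w' g3 g4

lemma markovStep {Ω : Type*} [MeasurableSpace Ω] {μ : Measure Ω} {G1 G2 G3 G4 : Ω → ℝ}
    (hv : LocalLipschitzProperty A B C D b f) (hA : 0 ≤ A) (hB : 0 ≤ B) (hC : 0 ≤ C)
    (hD : 0 ≤ D) (hb : 0 ≤ b) {r s : ℝ} (hr : 0 ≤ r) (hs : 0 ≤ s)
    (hint : ∀ x u y w : ℝ,
      Integrable (fun ω => f (x + r * u + G1 ω) (u + G2 ω) (y - s * w + G3 ω) (w + G4 ω)) μ)
    (hκ : Integrable (fun ω => exp (|G3 ω| + b * |G4 ω|)) μ) :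
    LocalLipschitzProperty (A * ∫ ω, exp (|G3 ω| + b * |G4 ω|) ∂μ)
      ((B + A * r) * ∫ ω, exp (|G3 ω| + b * |G4 ω|) ∂μ) (C * ∫ ω, exp (|G3 ω| + b * |G4 ω|) ∂μ)
      ((D + C * s) * ∫ ω, exp (|G3 ω| + b * |G4 ω|) ∂μ) (b + s)
      (_root_.markovStep μ G1 G2 G3 G4 r s f) := by
  intro x x' u u' y y' w w'
  unfold _root_.markovStep
  rw [← integral_sub (hint x u y w) (hint x' u' y' w')]
  refine abs_integral_le_integral_abs.trans ?_
  refine (integral_mono ((hint x u y w).sub (hint x' u' y' w')).abs (hκ.const_mul _)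
    fun ω => hv.abs_sub_shift_le hA hB hC hD hb hr hs x x' u u' y y' w w' _ _ _ _).trans_eq ?_
  rw [integral_const_mul]
  ring

lemma max (hf : LocalLipschitzProperty A B C D b f) (hg : LocalLipschitzProperty A B C D b g) :
    LocalLipschitzProperty A B C D b fun x u y w => max (f x u y w) (g x u y w) :=
  fun x x' u u' y y' w w' =>
    (abs_max_sub_max_le_max _ _ _ _).trans (max_le (hf x x' u u' y y' w w') (hg x x' u u' y y' w w'))

end LocalLipschitzProperty

theorem bdp_operator_preserves_local_lipschitz_general
    {Ω : Type*} [MeasurableSpace Ω] (ℙ : Measure Ω)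
    (G1 G2 G3 G4 : Ω → ℝ)
    (b σf σd δ : ℝ) (hb : 0 ≤ b) (hσf : 0 ≤ σf) (hσd : 0 ≤ σd) (hδ : 0 ≤ δ)
    (hκ : Integrable (fun ω => exp (|G3 ω| + b * |G4 ω|)) ℙ)
    (v : ℝ → ℝ → ℝ → ℝ → ℝ)
    (A B C D : ℝ) (hA : 0 ≤ A) (hB : 0 ≤ B) (hC : 0 ≤ C) (hD : 0 ≤ D)
    (hv : ∀ x x' u u' y y' w w' : ℝ,
      |v x u y w - v x' u' y' w'| ≤
        (A * |x - x'| + B * |u - u'| + C * |y - y'| + D * |w - w'|) *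
          exp (max |y| |y'| + b * max |w| |w'|))
    (hint : ∀ x u y w : ℝ, Integrable
      (fun ω => v (x + σf * δ * u + G1 ω) (u + G2 ω) (y - σd * δ * w + G3 ω) (w + G4 ω)) ℙ)
    (h : ℝ → ℝ → ℝ) (α γ : ℝ)
    (hh : ∀ x x' y y' : ℝ,
      |h x y - h x' y'| ≤ exp (max |y| |y'|) * (α * |x - x'| + γ * |y - y'|)) :
    ∀ x x' u u' y y' w w' : ℝ,
      |max (h x y)
          (∫ ω, v (x + σf * δ * u + G1 ω) (u + G2 ω) (y - σd * δ * w + G3 ω) (w + G4 ω) ∂ℙ) -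
        max (h x' y')
          (∫ ω, v (x' + σf * δ * u' + G1 ω) (u' + G2 ω) (y' - σd * δ * w' + G3 ω)
            (w' + G4 ω) ∂ℙ)|
        ≤ (max α (A * (∫ ω, exp (|G3 ω| + b * |G4 ω|) ∂ℙ)) * |x - x'| +
            ((B + A * σf * δ) * (∫ ω, exp (|G3 ω| + b * |G4 ω|) ∂ℙ)) * |u - u'| +
            max γ (C * (∫ ω, exp (|G3 ω| + b * |G4 ω|) ∂ℙ)) * |y - y'| +
            ((D + C * σd * δ) * (∫ ω, exp (|G3 ω| + b * |G4 ω|) ∂ℙ)) * |w - w'|) *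
          exp (max |y| |y'| + (b + σd * δ) * max |w| |w'|) := by
  set κ := ∫ ω, exp (|G3 ω| + b * |G4 ω|) ∂ℙ
  have hκ₀ : 0 ≤ κ := integral_nonneg fun _ => (exp_pos _).le
  have hσfδ : 0 ≤ σf * δ := mul_nonneg hσf hδ
  have hσdδ : 0 ≤ σd * δ := mul_nonneg hσd hδ
  have hPv : LocalLipschitzProperty (max α (A * κ)) ((B + A * σf * δ) * κ) (max γ (C * κ))
      ((D + C * σd * δ) * κ) (b + σd * δ) (markovStep ℙ G1 G2 G3 G4 (σf * δ) (σd * δ) v) :=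
    (LocalLipschitzProperty.markovStep hv hA hB hC hD hb hσfδ hσdδ hint hκ).mono
      (le_max_right _ _) (by rw [mul_assoc A]) (le_max_right _ _) (by rw [mul_assoc C]) le_rfl
  have hh' : LocalLipschitzProperty (max α (A * κ)) ((B + A * σf * δ) * κ) (max γ (C * κ))
      ((D + C * σd * δ) * κ) (b + σd * δ) fun x _ y _ => h x y :=
    (LocalLipschitzProperty.of_two_vars hh).mono (le_max_left _ _) (by positivity)
      (le_max_left _ _) (by positivity) (by positivity)
  exact hh'.max hPv

/-- **One-step backward induction: the Backward Dynamic Programming operator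
`v ↦ max(h, Pv)` preserves the local Lipschitz property.**
If `v` satisfies the local Lipschitz property with parameters `(A,B,C,D,b)`,
`Pv(x,u,y,w) = E[v(x + σ_f δ u + G¹, u + G², y − σ_d δ w + G³, w + G⁴)]` and
`|h(x,y) − h(x',y')| ≤ e^{max(|y|,|y'|)}(α|x−x'| + γ|y−y'|)`, then
`V(x,u,y,w) = max(h(x,y), Pv(x,u,y,w))` satisfies the local Lipschitz property with
parameters `(max(α, Aκ̄), (B+Aσ_fδ)κ̄, max(γ, Cκ̄), (D+Cσ_dδ)κ̄, b+σ_dδ)`,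
where `κ̄ = E[exp(|G³| + b|G⁴|)]`. -/
theorem bdp_operator_preserves_local_lipschitz
    {Ω : Type*} [MeasurableSpace Ω] (ℙ : Measure Ω) [IsProbabilityMeasure ℙ]
    (G1 G2 G3 G4 : Ω → ℝ)
    (hG1 : Measurable G1) (hG2 : Measurable G2) (hG3 : Measurable G3) (hG4 : Measurable G4)
    (b σf σd δ : ℝ) (hb : 0 ≤ b) (hσf : 0 ≤ σf) (hσd : 0 ≤ σd) (hδ : 0 ≤ δ)
    (hκ : Integrable (fun ω => exp (|G3 ω| + b * |G4 ω|)) ℙ)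
    (hκ' : Integrable
      (fun ω => (1 + |G1 ω| + |G2 ω| + |G3 ω| + |G4 ω|) * exp (|G3 ω| + b * |G4 ω|)) ℙ)
    (v : ℝ → ℝ → ℝ → ℝ → ℝ)
    (hvmeas : Measurable fun z : ℝ × ℝ × ℝ × ℝ => v z.1 z.2.1 z.2.2.1 z.2.2.2)
    (A B C D : ℝ) (hA : 0 ≤ A) (hB : 0 ≤ B) (hC : 0 ≤ C) (hD : 0 ≤ D)
    (hv : ∀ x x' u u' y y' w w' : ℝ,
      |v x u y w - v x' u' y' w'| ≤
        (A * |x - x'| + B * |u - u'| + C * |y - y'| + D * |w - w'|) *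
          exp (max |y| |y'| + b * max |w| |w'|))
    (hint : ∀ x u y w : ℝ, Integrable
      (fun ω => v (x + σf * δ * u + G1 ω) (u + G2 ω) (y - σd * δ * w + G3 ω) (w + G4 ω)) ℙ)
    (h : ℝ → ℝ → ℝ) (α γ : ℝ) (hα : 0 ≤ α) (hγ : 0 ≤ γ)
    (hh : ∀ x x' y y' : ℝ,
      |h x y - h x' y'| ≤ exp (max |y| |y'|) * (α * |x - x'| + γ * |y - y'|)) :
    ∀ x x' u u' y y' w w' : ℝ,
      |max (h x y)
          (∫ ω, v (x + σf * δ * u + G1 ω) (u + G2 ω) (y - σd * δ * w + G3 ω) (w + G4 ω) ∂ℙ) -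
        max (h x' y')
          (∫ ω, v (x' + σf * δ * u' + G1 ω) (u' + G2 ω) (y' - σd * δ * w' + G3 ω)
            (w' + G4 ω) ∂ℙ)|
        ≤ (max α (A * (∫ ω, exp (|G3 ω| + b * |G4 ω|) ∂ℙ)) * |x - x'| +
            ((B + A * σf * δ) * (∫ ω, exp (|G3 ω| + b * |G4 ω|) ∂ℙ)) * |u - u'| +
            max γ (C * (∫ ω, exp (|G3 ω| + b * |G4 ω|) ∂ℙ)) * |y - y'| +
            ((D + C * σd * δ) * (∫ ω, exp (|G3 ω| + b * |G4 ω|) ∂ℙ)) * |w - w'|) *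
          exp (max |y| |y'| + (b + σd * δ) * max |w| |w'|) :=
  bdp_operator_preserves_local_lipschitz_general ℙ G1 G2 G3 G4 b σf σd δ hb hσf hσd hδ hκ v A B C D
    hA hB hC hD hv hint h α γ hh
end

section
/- Let (Ω, 𝒜, ℙ) be a probability space and Z a real-valued random variable with E[e^{λ|Z|}] < ∞ for some λ ≥ 0. Let Ẑ be a real random variable satisfying the stationarity property Ẑ = E[Z | σ(Ẑ)] almost surely (as is the case for quadratic optimal quantizers). Then E[ e^{λ·max(|Z|, |Ẑ|)} ] ≤ 2 E[ e^{λ|Z|} ]. Moreover, if Z is centered Gaussian with variance σ_Z², then for every q ≥ 1, ( E[ e^{2qλ·max(|Z|,|Ẑ|)} ] )^{1/(2q)} ≤ 2^{1/q} · e^{q λ² σ_Z²}. -/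
/-!
Conditional Jensen for the convex function `x ↦ e^{λ|x|}` gives `E e^{λ|Ẑ|} ≤ E e^{λ|Z|}`, and
`e^{max(a,b)} ≤ e^a + e^b` then bounds the maximum by twice `E e^{λ|Z|}`. In the Gaussian case,
`e^{t|x|} ≤ e^{tx} + e^{-tx}` bounds `E e^{t|Z|}` by twice the moment generating function
`e^{vt²/2}`; taking `t = 2qλ` and the `2q`-th root gives the second estimate.
-/

open MeasureTheory ProbabilityTheory Real NNReal

lemma exp_max_le_exp_add_exp (a b : ℝ) : exp (max a b) ≤ exp a + exp b := by
  rcases max_cases a b with ⟨h, -⟩ | ⟨h, -⟩ <;> rw [h]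
  · linarith [exp_pos b]
  · linarith [exp_pos a]

lemma exp_mul_abs_le_exp_add_exp (t x : ℝ) : exp (t * |x|) ≤ exp (t * x) + exp (-t * x) := by
  rcases abs_cases x with ⟨h, -⟩ | ⟨h, -⟩ <;> rw [h]
  · linarith [exp_pos (-t * x)]
  · rw [mul_neg, ← neg_mul]
    linarith [exp_pos (t * x)]

lemma convexOn_exp_mul_abs {lam : ℝ} (hlam : 0 ≤ lam) :
    ConvexOn ℝ Set.univ (fun x : ℝ => exp (lam * |x|)) := by
  have hsup : (fun x : ℝ => exp (lam * |x|)) =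
      (fun x => exp (lam * x)) ⊔ (fun x => exp (-lam * x)) := by
    ext x
    rw [Pi.sup_apply, abs_eq_max_neg, mul_max_of_nonneg _ _ hlam, neg_mul_comm]
    exact Monotone.map_max exp_monotone
  rw [hsup]
  exact (convexOn_exp.comp_linearMap (LinearMap.mul ℝ ℝ lam)).sup
    (convexOn_exp.comp_linearMap (LinearMap.mul ℝ ℝ (-lam)))

section ExpIntegrals

variable {Ω : Type*} [MeasurableSpace Ω] {μ : Measure Ω} {f g X : Ω → ℝ}

lemma integrable_of_integrable_exp_mul_abs {lam : ℝ} (hlam : 0 < lam)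
    (hX : AEStronglyMeasurable X μ) (hint : Integrable (fun ω => exp (lam * |X ω|)) μ) :
    Integrable X μ := by
  refine (hint.div_const lam).mono' hX (ae_of_all _ fun ω => ?_)
  rw [Real.norm_eq_abs, le_div_iff₀ hlam]
  linarith [add_one_le_exp (lam * |X ω|)]

lemma integral_exp_max_le (hf : AEMeasurable f μ) (hg : AEMeasurable g μ)
    (hf_exp : Integrable (fun ω => exp (f ω)) μ) (hg_exp : Integrable (fun ω => exp (g ω)) μ) :
    ∫ ω, exp (max (f ω) (g ω)) ∂μ ≤ ∫ ω, exp (f ω) ∂μ + ∫ ω, exp (g ω) ∂μ := by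
  have hle : ∀ ω, exp (max (f ω) (g ω)) ≤ exp (f ω) + exp (g ω) :=
    fun ω => exp_max_le_exp_add_exp (f ω) (g ω)
  have hint : Integrable (fun ω => exp (max (f ω) (g ω))) μ :=
    (hf_exp.add hg_exp).mono' (hf.max hg).exp.aestronglyMeasurable
      (ae_of_all _ fun ω => (Real.norm_of_nonneg (exp_pos _).le).trans_le (hle ω))
  rw [← integral_add hf_exp hg_exp]
  exact integral_mono hint (hf_exp.add hg_exp) hle

lemma integral_exp_mul_abs_le_mgf_add_mgf {t : ℝ} (hX : AEMeasurable X μ)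
    (h_pos : Integrable (fun ω => exp (t * X ω)) μ)
    (h_neg : Integrable (fun ω => exp (-t * X ω)) μ) :
    Integrable (fun ω => exp (t * |X ω|)) μ ∧
      ∫ ω, exp (t * |X ω|) ∂μ ≤ mgf X μ t + mgf X μ (-t) := by
  have hle : ∀ ω, exp (t * |X ω|) ≤ exp (t * X ω) + exp (-t * X ω) :=
    fun ω => exp_mul_abs_le_exp_add_exp t (X ω)
  have hint : Integrable (fun ω => exp (t * |X ω|)) μ :=
    (h_pos.add h_neg).mono' (hX.abs.const_mul t).exp.aestronglyMeasurable
      (ae_of_all _ fun ω => (Real.norm_of_nonneg (exp_pos _).le).trans_le (hle ω))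
  refine ⟨hint, ?_⟩
  rw [mgf, mgf, ← integral_add h_pos h_neg]
  exact integral_mono hint (h_pos.add h_neg) hle

end ExpIntegrals

section Jensen

variable {Ω : Type*} {m mΩ : MeasurableSpace Ω} {μ : Measure Ω} [IsFiniteMeasure μ]
  {φ : ℝ → ℝ} {f : Ω → ℝ}

lemma ConvexOn.integrable_comp_condExp (hm : m ≤ mΩ) (hφ : ConvexOn ℝ Set.univ φ)
    (hφ_nonneg : 0 ≤ φ) (hf : Integrable f μ) (hφf : Integrable (φ ∘ f) μ) :
    Integrable (φ ∘ μ[f | m]) μ := by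
  have hφ_cont : Continuous φ := continuousOn_univ.1 (hφ.continuousOn isOpen_univ)
  refine (integrable_condExp (m := m) (f := φ ∘ f)).mono'
    (hφ_cont.comp_aestronglyMeasurable integrable_condExp.1) ?_
  filter_upwards [hφ.map_condExp_le_of_finiteDimensional hm hf hφf] with x hx
  exact (Real.norm_of_nonneg (hφ_nonneg _)).trans_le hx

lemma ConvexOn.integral_comp_condExp_le (hm : m ≤ mΩ) (hφ : ConvexOn ℝ Set.univ φ)
    (hφ_nonneg : 0 ≤ φ) (hf : Integrable f μ) (hφf : Integrable (φ ∘ f) μ) :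
    ∫ x, φ (μ[f | m] x) ∂μ ≤ ∫ x, φ (f x) ∂μ :=
  calc ∫ x, φ (μ[f | m] x) ∂μ ≤ ∫ x, μ[φ ∘ f | m] x ∂μ :=
        integral_mono_ae (hφ.integrable_comp_condExp hm hφ_nonneg hf hφf) integrable_condExp
          (hφ.map_condExp_le_of_finiteDimensional hm hf hφf)
    _ = ∫ x, φ (f x) ∂μ := integral_condExp hm

end Jensen

section Stationary

variable {Ω : Type*} [MeasurableSpace Ω]

def IsStationaryQuantizer (P : Measure Ω) (Z hatZ : Ω → ℝ) : Prop :=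
  hatZ =ᵐ[P] P[Z | MeasurableSpace.comap hatZ inferInstance]

variable {P : Measure Ω} [IsFiniteMeasure P] {Z hatZ : Ω → ℝ} {φ : ℝ → ℝ}

lemma IsStationaryQuantizer.integrable_comp (hstat : IsStationaryQuantizer P Z hatZ)
    (hhatZ : Measurable hatZ) (hφ : ConvexOn ℝ Set.univ φ) (hφ_nonneg : 0 ≤ φ)
    (hZ : Integrable Z P) (hφZ : Integrable (φ ∘ Z) P) : Integrable (φ ∘ hatZ) P :=
  (hφ.integrable_comp_condExp hhatZ.comap_le hφ_nonneg hZ hφZ).congr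
    (hstat.fun_comp φ).symm

lemma IsStationaryQuantizer.integral_comp_le (hstat : IsStationaryQuantizer P Z hatZ)
    (hhatZ : Measurable hatZ) (hφ : ConvexOn ℝ Set.univ φ) (hφ_nonneg : 0 ≤ φ)
    (hZ : Integrable Z P) (hφZ : Integrable (φ ∘ Z) P) : ∫ ω, φ (hatZ ω) ∂P ≤ ∫ ω, φ (Z ω) ∂P :=
  (integral_congr_ae (hstat.fun_comp φ)).trans_le
    (hφ.integral_comp_condExp_le hhatZ.comap_le hφ_nonneg hZ hφZ)

lemma IsStationaryQuantizer.integral_exp_mul_abs_le (hstat : IsStationaryQuantizer P Z hatZ)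
    (hZ : Measurable Z) (hhatZ : Measurable hatZ) {lam : ℝ} (hlam : 0 ≤ lam)
    (hint : Integrable (fun ω => exp (lam * |Z ω|)) P) :
    Integrable (fun ω => exp (lam * |hatZ ω|)) P ∧
      ∫ ω, exp (lam * |hatZ ω|) ∂P ≤ ∫ ω, exp (lam * |Z ω|) ∂P := by
  -- Jensen needs `Z` integrable, which `hint` only provides when `lam > 0`.
  rcases hlam.eq_or_lt with rfl | hpos
  · simp
  have hZint := integrable_of_integrable_exp_mul_abs hpos hZ.aestronglyMeasurable hint
  have hφ_nonneg : (0 : ℝ → ℝ) ≤ fun x => exp (lam * |x|) := fun _ => (exp_pos _).le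
  exact ⟨hstat.integrable_comp hhatZ (convexOn_exp_mul_abs hlam) hφ_nonneg hZint hint,
    hstat.integral_comp_le hhatZ (convexOn_exp_mul_abs hlam) hφ_nonneg hZint hint⟩

lemma IsStationaryQuantizer.integral_exp_mul_max_abs_le
    (hstat : IsStationaryQuantizer P Z hatZ) (hZ : Measurable Z) (hhatZ : Measurable hatZ)
    {lam : ℝ} (hlam : 0 ≤ lam) (hint : Integrable (fun ω => exp (lam * |Z ω|)) P) :
    ∫ ω, exp (lam * max |Z ω| |hatZ ω|) ∂P ≤ 2 * ∫ ω, exp (lam * |Z ω|) ∂P := by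
  obtain ⟨hint_hat, hle⟩ := hstat.integral_exp_mul_abs_le hZ hhatZ hlam hint
  simp_rw [mul_max_of_nonneg _ _ hlam]
  have := integral_exp_max_le (hZ.abs.const_mul lam).aemeasurable
    (hhatZ.abs.const_mul lam).aemeasurable hint hint_hat
  linarith

end Stationary

lemma integral_exp_mul_abs_le_of_map_eq_gaussianReal {Ω : Type*} [MeasurableSpace Ω]
    {μ : Measure Ω} [NeZero μ] {X : Ω → ℝ} {v : ℝ≥0}
    (hX : μ.map X = gaussianReal 0 v) (t : ℝ) :
    Integrable (fun ω => exp (t * |X ω|)) μ ∧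
      ∫ ω, exp (t * |X ω|) ∂μ ≤ 2 * exp (v * t ^ 2 / 2) := by
  have hX_meas : AEMeasurable X μ := aemeasurable_of_map_neZero (by rw [hX]; infer_instance)
  have hmgf : ∀ s, mgf X μ s = exp (v * s ^ 2 / 2) := fun s => by
    rw [mgf_gaussianReal hX, zero_mul, zero_add]
  have hint : ∀ s, Integrable (fun ω => exp (s * X ω)) μ := fun s =>
    mgf_pos_iff.1 (hmgf s ▸ exp_pos _)
  obtain ⟨hint_abs, hle⟩ := integral_exp_mul_abs_le_mgf_add_mgf hX_meas (hint t) (hint (-t))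
  refine ⟨hint_abs, hle.trans_eq ?_⟩
  rw [hmgf, hmgf, neg_sq]
  ring

/-- **Exponential moments of a stationary quantizer.**
If `Ẑ = E[Z | σ(Ẑ)]` a.s. (as holds for quadratic optimal quantizers) and
`E[e^{λ|Z|}] < ∞` for some `λ ≥ 0`, then `E[e^{λ max(|Z|,|Ẑ|)}] ≤ 2 E[e^{λ|Z|}]`.
Moreover, if `Z` is centered Gaussian with variance `v = σ_Z²`, then for every `q ≥ 1`,
`(E[e^{2qλ max(|Z|,|Ẑ|)}])^{1/(2q)} ≤ 2^{1/q} e^{q λ² σ_Z²}`. -/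
theorem exp_moment_stationary_quantizer
    {Ω : Type*} [MeasurableSpace Ω] (P : Measure Ω) [IsProbabilityMeasure P]
    (Z hatZ : Ω → ℝ) (hZ : Measurable Z) (hhatZ : Measurable hatZ)
    (lam : ℝ) (hlam : 0 ≤ lam)
    (hint : Integrable (fun ω => exp (lam * |Z ω|)) P)
    (hstat : hatZ =ᵐ[P] P[Z | MeasurableSpace.comap hatZ inferInstance]) :
    (∫ ω, exp (lam * max |Z ω| |hatZ ω|) ∂P) ≤ 2 * ∫ ω, exp (lam * |Z ω|) ∂P ∧
    ∀ v : ℝ≥0, Measure.map Z P = gaussianReal 0 v →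
      ∀ q : ℝ, 1 ≤ q →
        (∫ ω, exp (2 * q * lam * max |Z ω| |hatZ ω|) ∂P) ^ (1 / (2 * q)) ≤
          2 ^ (1 / q) * exp (q * lam ^ 2 * v) := by
  have hstat' : IsStationaryQuantizer P Z hatZ := hstat
  refine ⟨hstat'.integral_exp_mul_max_abs_le hZ hhatZ hlam hint, fun v hmap q hq => ?_⟩
  have hq_pos : 0 < q := zero_lt_one.trans_le hq
  obtain ⟨hint_q, hgauss⟩ := integral_exp_mul_abs_le_of_map_eq_gaussianReal hmap (2 * q * lam)
  have hmax := hstat'.integral_exp_mul_max_abs_le hZ hhatZ (by positivity) hint_q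
  calc (∫ ω, exp (2 * q * lam * max |Z ω| |hatZ ω|) ∂P) ^ (1 / (2 * q))
      ≤ (4 * exp (v * (2 * q * lam) ^ 2 / 2)) ^ (1 / (2 * q)) := by
        gcongr
        linarith
    _ = 2 ^ (1 / q) * exp (q * lam ^ 2 * v) := by
        rw [mul_rpow (by norm_num) (exp_pos _).le, ← exp_mul,
          show (4 : ℝ) = 2 ^ (2 : ℝ) by norm_num, ← Real.rpow_mul (by norm_num)]
        congr 2 <;> field_simp
end
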